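/- Let k ∈ ℝ, m a positive integer, a ∈ [0,1], and let r, x̄ satisfy 0 ≤ r ≤ x̄, with r ≤ π/(2√k) and x̄ ≤ π/(2√k) if k > 0, and a·sn_k(x̄) = sn_k(r). Then ∫₀^{x̄} aᵐ·sn_k(t)ᵐ dt ≥ ∫₀ʳ sn_k(t)ᵐ dt. -/

import Mathlib

open Filter Set MeasureTheory intervalIntegral

/-- `sn_k`: the solution of `y'' + k y = 0` with `y 0 = 0`, `y' 0 = 1`. -/
noncomputable def snK (k t : ℝ) : ℝ :=
  if 0 < k then Real.sin (Real.sqrt k * t) / Real.sqrt k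
  else if k < 0 then Real.sinh (Real.sqrt (-k) * t) / Real.sqrt (-k)
  else t

/-- `sn_k'`: the derivative of `sn_k`. -/
noncomputable def snK' (k t : ℝ) : ℝ :=
  if 0 < k then Real.cos (Real.sqrt k * t)
  else if k < 0 then Real.cosh (Real.sqrt (-k) * t)
  else 1

/-- Upper right Dini derivative: `D⁺ f x = limsup_{h → 0⁺} (f (x+h) - f x) / h`. -/
noncomputable def upperDiniRight (f : ℝ → ℝ) (x : ℝ) : EReal :=
  Filter.limsup (fun h : ℝ => (((f (x + h) - f x) / h : ℝ) : EReal)) (nhdsWithin 0 (Set.Ioi 0))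

open Real in

lemma snK_zero (k : ℝ) : snK k 0 = 0 := by
  unfold snK; split_ifs <;> simp

lemma sqrtk_mul_le {k t : ℝ} (hk : 0 < k) (h : t ≤ Real.pi / (2 * Real.sqrt k)) :
    Real.sqrt k * t ≤ Real.pi / 2 := by
  have hs : 0 < Real.sqrt k := Real.sqrt_pos.2 hk
  calc Real.sqrt k * t ≤ Real.sqrt k * (Real.pi / (2 * Real.sqrt k)) :=
        mul_le_mul_of_nonneg_left h hs.le
    _ = Real.pi / 2 := by field_simp

lemma sqrtk_mul_lt {k t : ℝ} (hk : 0 < k) (h : t < Real.pi / (2 * Real.sqrt k)) :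
    Real.sqrt k * t < Real.pi / 2 := by
  have hs : 0 < Real.sqrt k := Real.sqrt_pos.2 hk
  calc Real.sqrt k * t < Real.sqrt k * (Real.pi / (2 * Real.sqrt k)) :=
        (mul_lt_mul_iff_right₀ hs).2 h
    _ = Real.pi / 2 := by field_simp

lemma snK_mono {k s t : ℝ} (hs : 0 ≤ s) (hst : s ≤ t)
    (hk : 0 < k → t ≤ Real.pi / (2 * Real.sqrt k)) : snK k s ≤ snK k t := by
  unfold snK
  split_ifs with h1 h2
  · have hsq : 0 < Real.sqrt k := Real.sqrt_pos.2 h1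
    have ht2 : Real.sqrt k * t ≤ Real.pi / 2 := sqrtk_mul_le h1 (hk h1)
    have hs0 : (0:ℝ) ≤ Real.sqrt k * s := by positivity
    have hst' : Real.sqrt k * s ≤ Real.sqrt k * t := mul_le_mul_of_nonneg_left hst hsq.le
    have hsin : Real.sin (Real.sqrt k * s) ≤ Real.sin (Real.sqrt k * t) :=
      Real.strictMonoOn_sin.monotoneOn
        ⟨by linarith [Real.pi_pos], by linarith⟩ ⟨by linarith [Real.pi_pos], ht2⟩ hst'
    gcongr
  · have hsq : 0 < Real.sqrt (-k) := Real.sqrt_pos.2 (by linarith)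
    have : Real.sinh (Real.sqrt (-k) * s) ≤ Real.sinh (Real.sqrt (-k) * t) :=
      Real.sinh_le_sinh.2 (mul_le_mul_of_nonneg_left hst hsq.le)
    gcongr
  · exact hst

lemma snK_nonneg {k t : ℝ} (ht : 0 ≤ t) (hk : 0 < k → t ≤ Real.pi / (2 * Real.sqrt k)) :
    0 ≤ snK k t := by
  have := snK_mono le_rfl ht hk
  rwa [snK_zero] at this

lemma snK_pos {k t : ℝ} (ht : 0 < t) (hk : 0 < k → t ≤ Real.pi / (2 * Real.sqrt k)) :
    0 < snK k t := by
  unfold snK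
  split_ifs with h1 h2
  · have hsq : 0 < Real.sqrt k := Real.sqrt_pos.2 h1
    have h2' : Real.sqrt k * t ≤ Real.pi / 2 := sqrtk_mul_le h1 (hk h1)
    have : 0 < Real.sin (Real.sqrt k * t) :=
      Real.sin_pos_of_pos_of_lt_pi (by positivity) (by linarith [Real.pi_pos])
    positivity
  · have hsq : 0 < Real.sqrt (-k) := Real.sqrt_pos.2 (by linarith)
    have : 0 < Real.sinh (Real.sqrt (-k) * t) := Real.sinh_pos_iff.2 (by positivity)
    positivity
  · exact ht

lemma continuous_snK (k : ℝ) : Continuous (snK k) := by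
  unfold snK
  split_ifs with h1 h2
  · exact (Real.continuous_sin.comp (continuous_const.mul continuous_id)).div_const _
  · exact (Real.continuous_sinh.comp (continuous_const.mul continuous_id)).div_const _
  · exact continuous_id

lemma continuous_snK' (k : ℝ) : Continuous (snK' k) := by
  unfold snK'
  split_ifs with h1 h2
  · exact Real.continuous_cos.comp (continuous_const.mul continuous_id)
  · exact Real.continuous_cosh.comp (continuous_const.mul continuous_id)
  · exact continuous_const

lemma hasDerivAt_snK (k t : ℝ) : HasDerivAt (snK k) (snK' k t) t := by
  unfold snK snK'
  split_ifs with h1 h2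
  · have hsq : Real.sqrt k ≠ 0 := (Real.sqrt_pos.2 h1).ne'
    have h : HasDerivAt (fun x : ℝ => Real.sin (Real.sqrt k * x))
        (Real.cos (Real.sqrt k * t) * Real.sqrt k) t :=
      (Real.hasDerivAt_sin _).comp t (by simpa using (hasDerivAt_id t).const_mul (Real.sqrt k))
    have := h.div_const (Real.sqrt k)
    convert this using 1
    · rfl
    · rfl
    · rw [mul_div_cancel_right₀ _ hsq]
  · have hsq : Real.sqrt (-k) ≠ 0 := (Real.sqrt_pos.2 (by linarith)).ne'
    have h : HasDerivAt (fun x : ℝ => Real.sinh (Real.sqrt (-k) * x))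
        (Real.cosh (Real.sqrt (-k) * t) * Real.sqrt (-k)) t :=
      (Real.hasDerivAt_sinh _).comp t (by simpa using (hasDerivAt_id t).const_mul (Real.sqrt (-k)))
    have := h.div_const (Real.sqrt (-k))
    convert this using 1
    · rfl
    · rfl
    · rw [mul_div_cancel_right₀ _ hsq]
  · exact hasDerivAt_id' t

lemma snK'_eq {k t : ℝ} (ht : 0 ≤ t) (hk : 0 < k → t ≤ Real.pi / (2 * Real.sqrt k)) :
    snK' k t = Real.sqrt (1 - k * snK k t ^ 2) := by
  unfold snK snK'
  split_ifs with h1 h2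
  · have hsq : 0 < Real.sqrt k := Real.sqrt_pos.2 h1
    have hksq : Real.sqrt k ^ 2 = k := Real.sq_sqrt h1.le
    have h2' : Real.sqrt k * t ≤ Real.pi / 2 := sqrtk_mul_le h1 (hk h1)
    have h0 : 0 ≤ Real.sqrt k * t := by positivity
    have hcos : 0 ≤ Real.cos (Real.sqrt k * t) :=
      Real.cos_nonneg_of_mem_Icc ⟨by linarith [Real.pi_pos], h2'⟩
    have : 1 - k * (Real.sin (Real.sqrt k * t) / Real.sqrt k) ^ 2
        = Real.cos (Real.sqrt k * t) ^ 2 := by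
      rw [div_pow, hksq]
      field_simp
      rw [← Real.sin_sq_add_cos_sq (Real.sqrt k * t)]; ring
    rw [this, Real.sqrt_sq hcos]
  · have hsq : 0 < Real.sqrt (-k) := Real.sqrt_pos.2 (by linarith)
    have hksq : Real.sqrt (-k) ^ 2 = -k := Real.sq_sqrt (by linarith)
    have hkne : k ≠ 0 := h2.ne
    have hc : k * (Real.sinh (Real.sqrt (-k) * t) ^ 2 / -k)
        = -Real.sinh (Real.sqrt (-k) * t) ^ 2 := by
      rw [div_neg, mul_neg, mul_div_assoc', mul_div_cancel_left₀ _ hkne]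
    have : 1 - k * (Real.sinh (Real.sqrt (-k) * t) / Real.sqrt (-k)) ^ 2
        = Real.cosh (Real.sqrt (-k) * t) ^ 2 := by
      rw [div_pow, hksq, Real.cosh_sq, hc]
      ring
    rw [this, Real.sqrt_sq (Real.cosh_pos _).le]
  · have hk0 : k = 0 := le_antisymm (not_lt.1 h1) (not_lt.1 h2)
    simp [hk0]

lemma snK'_pos {k t : ℝ} (ht : 0 ≤ t) (hk : 0 < k → t < Real.pi / (2 * Real.sqrt k)) :
    0 < snK' k t := by
  unfold snK'
  split_ifs with h1 h2
  · have hsq : 0 < Real.sqrt k := Real.sqrt_pos.2 h1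
    have h0 : 0 ≤ Real.sqrt k * t := by positivity
    exact Real.cos_pos_of_mem_Ioo ⟨by linarith [Real.pi_pos], sqrtk_mul_lt h1 (hk h1)⟩
  · exact Real.cosh_pos _
  · exact one_pos

open Real in
noncomputable def gk (k : ℝ) (m : ℕ) (s : ℝ) : ℝ := s ^ m / Real.sqrt (1 - k * s ^ 2)

lemma snK_sq_lt {k b : ℝ} (hk : 0 < k) (hb : 0 ≤ b) (hb' : b < Real.pi / (2 * Real.sqrt k)) :
    k * snK k b ^ 2 < 1 := by
  have hsq : 0 < Real.sqrt k := Real.sqrt_pos.2 hk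
  have hX : Real.sqrt k * b < Real.pi / 2 := sqrtk_mul_lt hk hb'
  have hX0 : 0 ≤ Real.sqrt k * b := by positivity
  have hsin : Real.sin (Real.sqrt k * b) < 1 := by
    have := Real.strictMonoOn_sin (a := Real.sqrt k * b) (b := Real.pi / 2)
      ⟨by linarith [Real.pi_pos], hX.le⟩ ⟨by linarith [Real.pi_pos], le_refl _⟩ hX
    simpa using this
  have hsn : snK k b = Real.sin (Real.sqrt k * b) / Real.sqrt k := by simp [snK, hk]
  rw [hsn, div_pow, Real.sq_sqrt hk.le]
  rw [mul_div_assoc', mul_div_cancel_left₀ _ hk.ne']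
  nlinarith [Real.sin_nonneg_of_nonneg_of_le_pi (x := Real.sqrt k * b) hX0 (by linarith [Real.pi_pos])]

lemma one_sub_pos {k s S : ℝ} (hs : 0 ≤ s) (hsS : s ≤ S) (hS : 0 < k → k * S ^ 2 < 1) :
    0 < 1 - k * s ^ 2 := by
  rcases le_or_gt k 0 with h | h
  · nlinarith
  · have h1 := hS h
    nlinarith [pow_le_pow_left₀ hs hsS 2]

lemma continuousOn_gk {k S : ℝ} (m : ℕ) (hS0 : 0 ≤ S) (hS : 0 < k → k * S ^ 2 < 1) :
    ContinuousOn (gk k m) (Icc 0 S) := by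
  apply ContinuousOn.div (continuous_pow m).continuousOn
  · exact (Real.continuous_sqrt.comp
      (continuous_const.sub (continuous_const.mul (continuous_pow 2)))).continuousOn
  · intro s hs
    exact (Real.sqrt_pos.2 (one_sub_pos hs.1 hs.2 hS)).ne'

lemma integral_snK_pow (k : ℝ) (m : ℕ) {b : ℝ} (hb : 0 ≤ b)
    (hbk : 0 < k → b < Real.pi / (2 * Real.sqrt k)) :
    ∫ t in (0:ℝ)..b, snK k t ^ m = ∫ s in (0:ℝ)..(snK k b), gk k m s := by
  have huIcc : uIcc (0:ℝ) b = Icc 0 b := uIcc_of_le hb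
  have hxle : ∀ x ∈ Icc (0:ℝ) b, (0 < k → x < Real.pi / (2 * Real.sqrt k)) :=
    fun x hx hk => lt_of_le_of_lt hx.2 (hbk hk)
  have key := intervalIntegral.integral_comp_mul_deriv' (f := snK k) (f' := snK' k)
      (g := gk k m) (a := 0) (b := b)
      (fun x _ => hasDerivAt_snK k x) (continuous_snK' k).continuousOn ?_
  · rw [snK_zero] at key
    rw [← key]
    apply intervalIntegral.integral_congr
    intro x hx
    rw [huIcc] at hx
    have hx' : 0 < k → x < Real.pi / (2 * Real.sqrt k) := hxle x hx
    have hpos : 0 < snK' k x := snK'_pos hx.1 hx'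
    have heq : snK' k x = Real.sqrt (1 - k * snK k x ^ 2) :=
      snK'_eq hx.1 (fun hk => (hx' hk).le)
    simp only [Function.comp_apply, gk]
    rw [← heq, div_mul_cancel₀ _ hpos.ne']
  · rw [huIcc]
    apply (continuousOn_gk m (snK_nonneg hb fun hk => (hbk hk).le)
      (fun hk => snK_sq_lt hk hb (hbk hk))).mono
    intro s hs
    obtain ⟨x, hx, rfl⟩ := hs
    exact ⟨snK_nonneg hx.1 fun hk => (hxle x hx hk).le,
      snK_mono hx.1 hx.2 fun hk => (hbk hk).le⟩

lemma snK_eq_zero {k t : ℝ} (ht : 0 ≤ t) (hk : 0 < k → t ≤ Real.pi / (2 * Real.sqrt k))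
    (h : snK k t = 0) : t = 0 := by
  by_contra h0
  exact absurd h (snK_pos (lt_of_le_of_ne ht (Ne.symm h0)) hk).ne'

lemma mainAux (k : ℝ) (m : ℕ) (hm : 0 < m) (a : ℝ) (ha : a ∈ Set.Icc (0:ℝ) 1)
    (r xbar : ℝ) (hr : 0 ≤ r) (hrx : r ≤ xbar)
    (hk : 0 < k → xbar < Real.pi / (2 * Real.sqrt k))
    (heq : a * snK k xbar = snK k r) :
    (∫ t in (0:ℝ)..r, snK k t ^ m) ≤ ∫ t in (0:ℝ)..xbar, a ^ m * snK k t ^ m := by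
  obtain ⟨ha0, ha1⟩ := ha
  have hx0 : 0 ≤ xbar := hr.trans hrx
  have hrk : 0 < k → r < Real.pi / (2 * Real.sqrt k) := fun h => lt_of_le_of_lt hrx (hk h)
  rcases eq_or_lt_of_le ha0 with rfl | hapos
  · -- a = 0
    have hsnr : snK k r = 0 := by rw [← heq]; ring
    have hr0 : r = 0 := snK_eq_zero hr (fun h => (hrk h).le) hsnr
    subst hr0
    simp [zero_pow hm.ne']
  · -- 0 < a
    set S := snK k xbar with hSdef
    have hS0 : 0 ≤ S := snK_nonneg hx0 (fun h => (hk h).le)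
    have hSlt : 0 < k → k * S ^ 2 < 1 := fun h => snK_sq_lt h hx0 (hk h)
    have hIcc : uIcc (0:ℝ) S = Icc 0 S := uIcc_of_le hS0
    have hL : (∫ t in (0:ℝ)..r, snK k t ^ m) = ∫ s in (0:ℝ)..(a * S), gk k m s := by
      rw [integral_snK_pow k m hr hrk, ← heq]
    have hR : (∫ t in (0:ℝ)..xbar, a ^ m * snK k t ^ m)
        = a ^ m * ∫ s in (0:ℝ)..S, gk k m s := by
      rw [intervalIntegral.integral_const_mul, integral_snK_pow k m hx0 hk]
    have hcomp : (∫ s in (0:ℝ)..(a * S), gk k m s) = ∫ u in (0:ℝ)..S, a * gk k m (a * u) := by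
      have h1 := intervalIntegral.integral_comp_mul_left (a := (0:ℝ)) (b := S)
        (f := gk k m) (c := a) hapos.ne'
      rw [mul_zero] at h1
      rw [intervalIntegral.integral_const_mul, h1, smul_eq_mul]
      field_simp
    have hmapsTo : ∀ u ∈ Icc (0:ℝ) S, a * u ∈ Icc (0:ℝ) S := by
      intro u hu
      constructor
      · exact mul_nonneg hapos.le hu.1
      · calc a * u ≤ 1 * u := mul_le_mul_of_nonneg_right ha1 hu.1
          _ = u := one_mul u
          _ ≤ S := hu.2
    have hcont1 : ContinuousOn (fun u => a * gk k m (a * u)) (Icc (0:ℝ) S) := by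
      apply continuousOn_const.mul
      exact (continuousOn_gk m hS0 hSlt).comp
        ((continuous_const.mul continuous_id).continuousOn) hmapsTo
    have hcont2 : ContinuousOn (fun u => a ^ m * gk k m u) (Icc (0:ℝ) S) :=
      continuousOn_const.mul (continuousOn_gk m hS0 hSlt)
    have hmono : (∫ u in (0:ℝ)..S, a * gk k m (a * u)) ≤ ∫ u in (0:ℝ)..S, a ^ m * gk k m u := by
      apply intervalIntegral.integral_mono_on hS0
        ((hIcc ▸ hcont1).intervalIntegrable)
        ((hIcc ▸ hcont2).intervalIntegrable)
      intro u hu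
      have hu0 : 0 ≤ u := hu.1
      have h1 : 0 < 1 - k * u ^ 2 := one_sub_pos hu0 hu.2 hSlt
      have hau : a * u ∈ Icc (0:ℝ) S := hmapsTo u hu
      have h2 : 0 < 1 - k * (a * u) ^ 2 := one_sub_pos hau.1 hau.2 hSlt
      have hs1 : 0 < Real.sqrt (1 - k * u ^ 2) := Real.sqrt_pos.2 h1
      have hs2 : 0 < Real.sqrt (1 - k * (a * u) ^ 2) := Real.sqrt_pos.2 h2
      unfold gk
      rw [mul_div_assoc', mul_div_assoc', div_le_div_iff₀ hs2 hs1]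
      have key : a * Real.sqrt (1 - k * u ^ 2) ≤ Real.sqrt (1 - k * (a * u) ^ 2) := by
        have e1 : a * Real.sqrt (1 - k * u ^ 2)
            = Real.sqrt (a ^ 2 * (1 - k * u ^ 2)) := by
          rw [Real.sqrt_mul (sq_nonneg a), Real.sqrt_sq ha0]
        rw [e1]
        apply Real.sqrt_le_sqrt
        nlinarith [sq_nonneg u]
      calc a * (a * u) ^ m * Real.sqrt (1 - k * u ^ 2)
          = (a ^ m * u ^ m) * (a * Real.sqrt (1 - k * u ^ 2)) := by rw [mul_pow]; ring
        _ ≤ (a ^ m * u ^ m) * Real.sqrt (1 - k * (a * u) ^ 2) :=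
            mul_le_mul_of_nonneg_left key (by positivity)
        _ = a ^ m * u ^ m * Real.sqrt (1 - k * (a * u) ^ 2) := rfl
    calc (∫ t in (0:ℝ)..r, snK k t ^ m) = ∫ s in (0:ℝ)..(a * S), gk k m s := hL
      _ = ∫ u in (0:ℝ)..S, a * gk k m (a * u) := hcomp
      _ ≤ ∫ u in (0:ℝ)..S, a ^ m * gk k m u := hmono
      _ = a ^ m * ∫ s in (0:ℝ)..S, gk k m s := intervalIntegral.integral_const_mul _ _
      _ = ∫ t in (0:ℝ)..xbar, a ^ m * snK k t ^ m := hR.symm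

open Real in
theorem integral_scaled_snK_ge (k : ℝ) (m : ℕ) (hm : 0 < m) (a : ℝ) (ha : a ∈ Set.Icc (0:ℝ) 1)
    (r xbar : ℝ) (hr : 0 ≤ r) (hrx : r ≤ xbar)
    (hk : 0 < k → r ≤ Real.pi / (2 * Real.sqrt k) ∧ xbar ≤ Real.pi / (2 * Real.sqrt k))
    (heq : a * snK k xbar = snK k r) :
    (∫ t in (0:ℝ)..r, snK k t ^ m) ≤ ∫ t in (0:ℝ)..xbar, a ^ m * snK k t ^ m := by
  by_cases hkpos : 0 < k
  · rcases lt_or_eq_of_le (hk hkpos).2 with hlt | hxeq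
    · exact mainAux k m hm a ha r xbar hr hrx (fun _ => hlt) heq
    · -- edge case : xbar = π / (2 √k)
      have hx0 : 0 ≤ xbar := hr.trans hrx
      have hxpos : 0 < xbar := by
        rw [hxeq]
        have := Real.pi_pos
        have := Real.sqrt_pos.2 hkpos
        positivity
      have hSpos : 0 < snK k xbar := snK_pos hxpos (fun _ => le_of_eq hxeq)
      rcases eq_or_lt_of_le hrx with rfl | hrlt
      · -- r = xbar
        have ha1 : a = 1 := by
          have h1 : a * snK k r = 1 * snK k r := by rw [heq, one_mul]
          exact mul_right_cancel₀ hSpos.ne' h1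
        rw [ha1]
        simp
      · -- r < xbar : take a limit x → xbar⁻
        have hconts : Continuous fun x => ∫ t in (0:ℝ)..x, snK k t ^ m :=
          intervalIntegral.continuous_primitive
            (fun c d => ((continuous_snK k).pow m).intervalIntegrable c d) 0
        have haval : snK k r / snK k xbar = a := by
          rw [← heq]; field_simp
        have hF : ContinuousAt
            (fun x => (snK k r / snK k x) ^ m * ∫ t in (0:ℝ)..x, snK k t ^ m) xbar := by
          apply ContinuousAt.mul
          · exact (continuousAt_const.div (continuous_snK k).continuousAt hSpos.ne').pow m
          · exact hconts.continuousAt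
        have htend : Tendsto
            (fun x => (snK k r / snK k x) ^ m * ∫ t in (0:ℝ)..x, snK k t ^ m)
            (nhdsWithin xbar (Iio xbar))
            (nhds (∫ t in (0:ℝ)..xbar, a ^ m * snK k t ^ m)) := by
          have h2 : Tendsto
              (fun x => (snK k r / snK k x) ^ m * ∫ t in (0:ℝ)..x, snK k t ^ m)
              (nhdsWithin xbar (Iio xbar))
              (nhds ((snK k r / snK k xbar) ^ m * ∫ t in (0:ℝ)..xbar, snK k t ^ m)) :=
            (hF.tendsto).mono_left nhdsWithin_le_nhds
          rwa [intervalIntegral.integral_const_mul, ← haval]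
        apply ge_of_tendsto htend
        filter_upwards [Ioo_mem_nhdsLT_of_mem (⟨hrlt, le_refl xbar⟩ : xbar ∈ Ioc r xbar)]
          with x hx
        have hxb : x < Real.pi / (2 * Real.sqrt k) := hxeq ▸ hx.2
        have hsnxpos : 0 < snK k x := snK_pos (hr.trans_lt hx.1) (fun _ => hxb.le)
        have hsnr0 : 0 ≤ snK k r := snK_nonneg hr (fun _ => (hrx.trans_eq hxeq))
        have hsnle : snK k r ≤ snK k x := snK_mono hr hx.1.le (fun _ => hxb.le)
        have key := mainAux k m hm (snK k r / snK k x)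
          ⟨div_nonneg hsnr0 hsnxpos.le, (div_le_one hsnxpos).2 hsnle⟩
          r x hr hx.1.le (fun _ => hxb)
          (div_mul_cancel₀ _ hsnxpos.ne')
        rwa [intervalIntegral.integral_const_mul] at key
  · exact mainAux k m hm a ha r xbar hr hrx (fun h => absurd h hkpos) heq
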